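/- Let K, M > 0. There exist ε₀ > 0 and C > 0, depending only on K and M, such that the following holds for every ε ∈ [0, ε₀]: whenever Φ, g : ℝ³ → ℝ and n : ℝ³ → ℝ³ are smooth 2π-periodic functions with |n(x)| ≤ 1 and |Φ(x)| ≤ K for all x, ∫_Q g² dx ≤ M², and −div((Id + ε n⊗n)∇Φ) = g on ℝ³, then ∫_Q |ΔΦ|² dx ≤ ¼ ∫_Q |Δn|² dx + C. -/

import Mathlib

noncomputable section
open MeasureTheory Real

/-- Vectors in `ℝ³`. -/
abbrev V3 : Type := Fin 3 → ℝ
/-- Real `3 × 3` matrices. -/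
abbrev M3 : Type := Matrix (Fin 3) (Fin 3) ℝ

/-- The periodicity cell `Q = [-π, π]³`. -/
def Q3 : Set V3 := Set.Icc (fun _ => -Real.pi) (fun _ => Real.pi)

/-- Euclidean inner product on `ℝ³`. -/
def dot (a b : V3) : ℝ := ∑ i, a i * b i

/-- Frobenius inner product `A : B = ∑_{i,j} A_{ij} B_{ij}`. -/
def mdot (A B : M3) : ℝ := ∑ i, ∑ j, A i j * B i j

/-- Tensor product `(a ⊗ b)_{ij} = a_i b_j`. -/
def outer (a b : V3) : M3 := Matrix.of fun i j => a i * b j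

/-- Matrix-vector product. -/
def mv (A : M3) (x : V3) : V3 := A.mulVec x

/-- Partial derivative `∂_i f` of a scalar field. -/
def pd (i : Fin 3) (f : V3 → ℝ) (x : V3) : ℝ := fderiv ℝ f x (Pi.single i 1)

/-- Spatial gradient of a scalar field. -/
def grad (f : V3 → ℝ) (x : V3) : V3 := fun i => pd i f x

/-- Divergence of a vector field. -/
def divg (w : V3 → V3) (x : V3) : ℝ := ∑ i, pd i (fun y => w y i) x

/-- Divergence of a matrix field, `(div A)_i = ∑_j ∂_j A_{ij}`. -/
def divM (A : V3 → M3) (x : V3) : V3 := fun i => ∑ j, pd j (fun y => A y i j) x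

/-- Laplacian of a scalar field. -/
def lap (f : V3 → ℝ) (x : V3) : ℝ := ∑ i, pd i (fun y => pd i f y) x

/-- Componentwise Laplacian of a vector field. -/
def lapV (w : V3 → V3) (x : V3) : V3 := fun k => lap (fun y => w y k) x

/-- Gradient matrix `(∇w)_{ij} = ∂_j w_i`. -/
def gradM (w : V3 → V3) (x : V3) : M3 := Matrix.of fun i j => pd j (fun y => w y i) x

/-- Symmetric part `D(v) = ½(∇v + ∇vᵀ)` of the velocity gradient. -/
def Dv (w : V3 → V3) (x : V3) : M3 := (1/2 : ℝ) • (gradM w x + (gradM w x).transpose)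

/-- Antisymmetric part `Ω(v) = ½(∇v − ∇vᵀ)` of the velocity gradient. -/
def Ov (w : V3 → V3) (x : V3) : M3 := (1/2 : ℝ) • (gradM w x - (gradM w x).transpose)

/-- `(∇n ⊙ ∇n)_{ij} = ∑_k ∂_i n_k ∂_j n_k`. -/
def odotM (w : V3 → V3) (x : V3) : M3 :=
  Matrix.of fun i j => ∑ k, pd i (fun y => w y k) x * pd j (fun y => w y k) x

/-- `|∇w|² = ∑_{i,k} (∂_i w_k)²`. -/
def gnorm2 (w : V3 → V3) (x : V3) : ℝ := ∑ i, ∑ k, (pd i (fun y => w y k) x)^2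

/-- `2π`-periodicity in the space variables. -/
def Per {α : Type*} (f : V3 → α) : Prop :=
  ∀ (x : V3) (i : Fin 3), f (x + Pi.single i (2 * Real.pi)) = f x

/-- The dielectric matrix `Id + ε n ⊗ n`. -/
def matA (ε : ℝ) (n : V3) : M3 := 1 + ε • outer n n

/-- The singular configuration potential `F(r) = (1 − r) log(1 − r)`. -/
def Fpot (r : ℝ) : ℝ := (1 - r) * Real.log (1 - r)

/-- Its derivative `F'(r) = −log(1 − r) − 1`. -/
def Fpot' (r : ℝ) : ℝ := -Real.log (1 - r) - 1

/-- The corotational (Lie) derivative `n̊ = ∂_t n + v·∇n − Ω(v) n`. -/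
def ringD (v n : V3 → ℝ → V3) (x : V3) (t : ℝ) : V3 :=
  (fun k => deriv (fun s => n x s k) t)
    + (fun k => dot (v x t) (grad (fun y => n y t k) x))
    - mv (Ov (fun y => v y t) x) (n x t)

section Aux
open Finset

lemma contDiff_pd {f : V3 → ℝ} (hf : ContDiff ℝ (⊤ : ℕ∞) f) (i : Fin 3) :
    ContDiff ℝ (⊤ : ℕ∞) (pd i f) := by
  have h1 : ContDiff ℝ (⊤ : ℕ∞) (fderiv ℝ f) := hf.fderiv_right (by simp)
  exact h1.clm_apply contDiff_const

lemma diffAt {f : V3 → ℝ} (hf : ContDiff ℝ (⊤ : ℕ∞) f) (x : V3) : DifferentiableAt ℝ f x :=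
  (hf.differentiable (by simp)).differentiableAt

lemma pd_add {f g : V3 → ℝ} (i : Fin 3) (x : V3)
    (hf : DifferentiableAt ℝ f x) (hg : DifferentiableAt ℝ g x) :
    pd i (fun y => f y + g y) x = pd i f x + pd i g x := by
  unfold pd; rw [fderiv_fun_add hf hg]; rfl

lemma pd_const_mul {f : V3 → ℝ} (c : ℝ) (i : Fin 3) (x : V3)
    (hf : DifferentiableAt ℝ f x) :
    pd i (fun y => c * f y) x = c * pd i f x := by
  unfold pd; rw [fderiv_const_mul hf]; rfl

lemma pd_mul {f g : V3 → ℝ} (i : Fin 3) (x : V3)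
    (hf : DifferentiableAt ℝ f x) (hg : DifferentiableAt ℝ g x) :
    pd i (fun y => f y * g y) x = f x * pd i g x + g x * pd i f x := by
  unfold pd; rw [fderiv_fun_mul hf hg]; rfl

lemma pd_sum {ι : Type*} (s : Finset ι) (f : ι → V3 → ℝ) (i : Fin 3) (x : V3)
    (hf : ∀ j ∈ s, DifferentiableAt ℝ (f j) x) :
    pd i (fun y => ∑ j ∈ s, f j y) x = ∑ j ∈ s, pd i (f j) x := by
  unfold pd; rw [fderiv_fun_sum hf, ContinuousLinearMap.sum_apply]

lemma per_pd {f : V3 → ℝ} (hf : ContDiff ℝ (⊤ : ℕ∞) f) (hp : Per f) (i : Fin 3) :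
    Per (pd i f) := by
  intro x j
  have hfe : (fun y => f (y + Pi.single j (2*Real.pi))) = f := funext fun y => hp y j
  have hd : DifferentiableAt ℝ f (x + Pi.single j (2*Real.pi)) := diffAt hf _
  have h1 : HasFDerivAt (fun y => f (y + Pi.single j (2*Real.pi)))
      ((fderiv ℝ f (x + Pi.single j (2*Real.pi))).comp (ContinuousLinearMap.id ℝ V3)) x :=
    hd.hasFDerivAt.comp x ((hasFDerivAt_id x).add_const _)
  have h2 : fderiv ℝ f x = fderiv ℝ f (x + Pi.single j (2*Real.pi)) := by
    conv_lhs => rw [← hfe]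
    rw [h1.fderiv, ContinuousLinearMap.comp_id]
  unfold pd; rw [← h2]

end Aux
section Aux2
open Finset

lemma integrableOn_Q3 {f : V3 → ℝ} (hf : Continuous f) : IntegrableOn f Q3 := by
  exact hf.continuousOn.integrableOn_compact isCompact_Icc

lemma integral_pd_eq_zero {F : V3 → ℝ} (hF : ContDiff ℝ (⊤ : ℕ∞) F) (hp : Per F) (i : Fin 3) :
    ∫ x in Q3, pd i F x = 0 := by
  classical
  set J : ℝ →L[ℝ] (Fin 3 → ℝ) :=
    ContinuousLinearMap.pi (Pi.single i (ContinuousLinearMap.id ℝ ℝ)) with hJ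
  have hJapp : ∀ (t : ℝ) (j : Fin 3), J t j = if j = i then t else 0 := by
    intro t j
    simp only [hJ, ContinuousLinearMap.pi_apply]
    rcases eq_or_ne j i with rfl | hne
    · simp
    · simp [Pi.single_eq_of_ne hne, if_neg hne]
  set a : Fin 3 → ℝ := fun _ => -Real.pi with ha
  set b : Fin 3 → ℝ := fun _ => Real.pi with hb
  have hle : a ≤ b := by
    intro j; simp only [ha, hb]; linarith [Real.pi_pos]
  set f : V3 → (Fin 3 → ℝ) := fun x => J (F x) with hf
  set f' : V3 → V3 →L[ℝ] (Fin 3 → ℝ) := fun x => J.comp (fderiv ℝ F x) with hf'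
  have hdiv : ∀ x, (∑ j, f' x (Pi.single j 1) j) = pd i F x := by
    intro x
    rw [Finset.sum_eq_single i]
    · simp only [hf', ContinuousLinearMap.comp_apply, hJapp, if_pos rfl]; rfl
    · intro j _ hj
      simp only [hf', ContinuousLinearMap.comp_apply, hJapp, if_neg hj]
    · intro h; exact absurd (Finset.mem_univ i) h
  have key := MeasureTheory.integral_divergence_of_hasFDerivAt_off_countable
      (n := 2) a b hle f f' ∅ Set.countable_empty
      ((J.continuous.comp hF.continuous).continuousOn)
      (fun x _ => J.hasFDerivAt.comp x (diffAt hF x).hasFDerivAt)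
      (by
        refine MeasureTheory.IntegrableOn.congr_fun ?_ (fun x _ => (hdiv x).symm)
          measurableSet_Icc
        exact integrableOn_Q3 (contDiff_pd hF i).continuous)
  have hQ : (Set.Icc a b : Set V3) = Q3 := rfl
  have hLHS : (∫ x in Set.Icc a b, ∑ j, f' x (Pi.single j 1) j) = ∫ x in Q3, pd i F x := by
    rw [hQ]
    exact MeasureTheory.setIntegral_congr_fun measurableSet_Icc (fun x _ => hdiv x)
  rw [hLHS] at key
  rw [key]
  apply Finset.sum_eq_zero
  intro j _
  rcases eq_or_ne j i with rfl | hj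
  · have hfun : (fun y : Fin 2 → ℝ => f (Fin.insertNth j (b j) y) j)
        = fun y : Fin 2 → ℝ => f (Fin.insertNth j (a j) y) j := by
      funext y
      have hkey : (Fin.insertNth j (b j) y : Fin 3 → ℝ)
          = Fin.insertNth j (a j) y + Pi.single j (2 * Real.pi) := by
        funext k
        refine Fin.succAboveCases j ?_ ?_ k
        · simp only [Fin.insertNth_apply_same, Pi.add_apply, Pi.single_eq_same, ha, hb]
          ring
        · intro m
          simp only [Fin.insertNth_apply_succAbove, Pi.add_apply,
            Pi.single_eq_of_ne (Fin.succAbove_ne j m), add_zero]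
      simp only [hf, hkey, hp _ j]
    rw [hfun, sub_self]
  · have h0 : ∀ (z : V3), f z j = 0 := fun z => by show J (F z) j = 0; rw [hJapp, if_neg hj]
    simp only [h0, MeasureTheory.integral_zero, sub_self]

end Aux2
section Aux3pre

lemma measQ3 : MeasurableSet Q3 := measurableSet_Icc

lemma setInt_congr {f g : V3 → ℝ} (h : ∀ x, f x = g x) :
    (∫ x in Q3, f x) = ∫ x in Q3, g x :=
  MeasureTheory.setIntegral_congr_fun measQ3 (fun x _ => h x)

lemma intQ3_nonneg {f : V3 → ℝ} (h : ∀ x, 0 ≤ f x) : 0 ≤ ∫ x in Q3, f x :=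
  MeasureTheory.setIntegral_nonneg measQ3 (fun x _ => h x)

lemma intQ3_mono {f g : V3 → ℝ} (hf : Continuous f) (hg : Continuous g)
    (h : ∀ x, f x ≤ g x) : (∫ x in Q3, f x) ≤ ∫ x in Q3, g x :=
  MeasureTheory.setIntegral_mono_on (integrableOn_Q3 hf) (integrableOn_Q3 hg) measQ3
    (fun x _ => h x)

end Aux3pre

section Aux3
open Finset

lemma per_mul {f g : V3 → ℝ} (hf : Per f) (hg : Per g) : Per (fun y => f y * g y) := by
  intro x j; simp only [hf x j, hg x j]

lemma ibp {f g : V3 → ℝ} (hf : ContDiff ℝ (⊤ : ℕ∞) f) (hg : ContDiff ℝ (⊤ : ℕ∞) g)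
    (hpf : Per f) (hpg : Per g) (i : Fin 3) :
    ∫ x in Q3, pd i f x * g x = -∫ x in Q3, f x * pd i g x := by
  have hmul : ContDiff ℝ (⊤ : ℕ∞) (fun y => f y * g y) := hf.mul hg
  have h0 := integral_pd_eq_zero hmul (per_mul hpf hpg) i
  have hpt : ∀ x, pd i (fun y => f y * g y) x = f x * pd i g x + pd i f x * g x := by
    intro x
    rw [pd_mul i x (diffAt hf x) (diffAt hg x)]; ring
  rw [setInt_congr hpt] at h0
  rw [MeasureTheory.integral_add
      (integrableOn_Q3 (hf.continuous.fun_mul (contDiff_pd hg i).continuous))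
      (integrableOn_Q3 ((contDiff_pd hf i).continuous.fun_mul hg.continuous))] at h0
  linarith [h0]

lemma pd_eq_snd {f : V3 → ℝ} (hf : ContDiff ℝ (⊤ : ℕ∞) f) (i j : Fin 3) (x : V3) :
    pd i (pd j f) x = fderiv ℝ (fderiv ℝ f) x (Pi.single i 1) (Pi.single j 1) := by
  have hdf : ContDiff ℝ (⊤ : ℕ∞) (fderiv ℝ f) := hf.fderiv_right (by simp)
  have hc : DifferentiableAt ℝ (fderiv ℝ f) x := (hdf.differentiable (by simp)).differentiableAt
  have h1 : fderiv ℝ (fun y => fderiv ℝ f y (Pi.single j 1)) x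
      = (fderiv ℝ f x).comp (fderiv ℝ (fun _ : V3 => (Pi.single j 1 : V3)) x)
        + (fderiv ℝ (fderiv ℝ f) x).flip (Pi.single j 1) :=
    fderiv_clm_apply hc (differentiableAt_const _)
  show fderiv ℝ (fun y => fderiv ℝ f y (Pi.single j 1)) x (Pi.single i 1) = _
  rw [h1]
  simp [ContinuousLinearMap.flip_apply]

lemma pd_comm {f : V3 → ℝ} (hf : ContDiff ℝ (⊤ : ℕ∞) f) (i j : Fin 3) (x : V3) :
    pd i (pd j f) x = pd j (pd i f) x := by
  rw [pd_eq_snd hf i j x, pd_eq_snd hf j i x]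
  exact (hf.contDiffAt.isSymmSndFDerivAt (by norm_num; exact WithTop.coe_le_coe.mpr le_top)) _ _

lemma L2CS {f g : V3 → ℝ} (hf : Continuous f) (hg : Continuous g) :
    ∫ x in Q3, f x * g x
      ≤ Real.sqrt (∫ x in Q3, (f x)^2) * Real.sqrt (∫ x in Q3, (g x)^2) := by
  set A := ∫ x in Q3, (f x)^2 with hA
  set B := ∫ x in Q3, (g x)^2 with hB
  set T := ∫ x in Q3, f x * g x with hT
  have hAnn : 0 ≤ A := intQ3_nonneg (fun x => sq_nonneg _)
  have hBnn : 0 ≤ B := intQ3_nonneg (fun x => sq_nonneg _)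
  have hq : ∀ t : ℝ, 0 ≤ A * (t * t) + (2 * T) * t + B := by
    intro t
    have h1 : ∀ x, 0 ≤ (t * f x + g x)^2 := fun x => sq_nonneg _
    have h2 : (0:ℝ) ≤ ∫ x in Q3, (t * f x + g x)^2 :=
      intQ3_nonneg h1
    have h3 : ∀ x : V3, (t * f x + g x)^2
        = (t * t) * (f x)^2 + (2 * t) * (f x * g x) + (g x)^2 := fun x => by ring
    rw [setInt_congr h3] at h2
    have i1 : MeasureTheory.IntegrableOn (fun x => (t * t) * (f x)^2) Q3 :=
      (integrableOn_Q3 (hf.pow 2)).const_mul _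
    have i2 : MeasureTheory.IntegrableOn (fun x => (2 * t) * (f x * g x)) Q3 :=
      (integrableOn_Q3 (hf.mul hg)).const_mul _
    have i3 : MeasureTheory.IntegrableOn (fun x => (g x)^2) Q3 :=
      integrableOn_Q3 (hg.pow 2)
    have i12 : MeasureTheory.IntegrableOn
        (fun x => (t * t) * (f x)^2 + (2 * t) * (f x * g x)) Q3 := i1.add i2
    rw [MeasureTheory.integral_add i12 i3, MeasureTheory.integral_add i1 i2,
      MeasureTheory.integral_const_mul, MeasureTheory.integral_const_mul] at h2
    rw [← hA, ← hB, ← hT] at h2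
    nlinarith [h2]
  have hd := discrim_le_zero hq
  rw [discrim] at hd
  have hT2 : T^2 ≤ A * B := by nlinarith [hd]
  calc T ≤ |T| := le_abs_self T
    _ = Real.sqrt (T^2) := (Real.sqrt_sq_eq_abs T).symm
    _ ≤ Real.sqrt (A * B) := Real.sqrt_le_sqrt hT2
    _ = Real.sqrt A * Real.sqrt B := Real.sqrt_mul hAnn B

end Aux3
section Aux4
open Finset

lemma lap_identity {u : V3 → ℝ} (hu : ContDiff ℝ (⊤ : ℕ∞) u) (hp : Per u) :
    (∫ x in Q3, (lap u x)^2) = ∑ i : Fin 3, ∑ j : Fin 3,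
      ∫ x in Q3, (pd i (pd j u) x)^2 := by
  have hsm : ∀ i : Fin 3, ContDiff ℝ (⊤ : ℕ∞) (pd i u) := fun i => contDiff_pd hu i
  have hpe : ∀ i : Fin 3, Per (pd i u) := fun i => per_pd hu hp i
  have hsm2 : ∀ i j : Fin 3, ContDiff ℝ (⊤ : ℕ∞) (pd i (pd j u)) :=
    fun i j => contDiff_pd (hsm j) i
  have hpe2 : ∀ i j : Fin 3, Per (pd i (pd j u)) := fun i j => per_pd (hsm j) (hpe j) i
  have hexp : ∀ x, (lap u x)^2
      = ∑ i : Fin 3, ∑ j : Fin 3, pd i (pd i u) x * pd j (pd j u) x := by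
    intro x
    show (lap u x)^2 = _
    rw [sq]
    unfold lap
    rw [Finset.sum_mul_sum]
  rw [setInt_congr hexp]
  rw [MeasureTheory.integral_finset_sum _ (fun i _ => by
    apply integrableOn_Q3
    exact continuous_finset_sum _ (fun j _ =>
      ((hsm2 i i).continuous.mul (hsm2 j j).continuous)))]
  refine Finset.sum_congr rfl (fun i _ => ?_)
  rw [MeasureTheory.integral_finset_sum _ (fun j _ =>
    integrableOn_Q3 ((hsm2 i i).continuous.fun_mul (hsm2 j j).continuous))]
  refine Finset.sum_congr rfl (fun j _ => ?_)
  -- ∫ pd i (pd i u) * pd j (pd j u) = ∫ (pd i (pd j u))^2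
  have e1 : (∫ x in Q3, pd i (pd i u) x * pd j (pd j u) x)
      = -∫ x in Q3, pd i u x * pd i (pd j (pd j u)) x :=
    ibp (hsm i) (hsm2 j j) (hpe i) (hpe2 j j) i
  have e2 : ∀ x, pd i u x * pd i (pd j (pd j u)) x
      = pd i u x * pd j (pd i (pd j u)) x :=
    fun x => by rw [pd_comm (hsm j) i j x]
  have e4 : (∫ x in Q3, pd j (pd i u) x * pd i (pd j u) x)
      = -∫ x in Q3, pd i u x * pd j (pd i (pd j u)) x :=
    ibp (hsm i) (hsm2 i j) (hpe i) (hpe2 i j) j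
  have e5 : ∀ x, pd j (pd i u) x * pd i (pd j u) x = (pd i (pd j u) x)^2 :=
    fun x => by rw [pd_comm hu j i x, sq]
  rw [e1, setInt_congr e2, ← e4, setInt_congr e5]

end Aux4
section Aux5
open Finset

lemma cs1 (c : Fin 3 → ℝ) : (∑ i, c i)^2 ≤ 3 * ∑ i, (c i)^2 := by
  have h := Finset.sum_mul_sq_le_sq_mul_sq Finset.univ (fun _ : Fin 3 => (1:ℝ)) c
  simp only [one_mul, one_pow] at h
  calc (∑ i, c i)^2 ≤ (∑ _i : Fin 3, (1:ℝ)) * ∑ i, (c i)^2 := h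
    _ = 3 * ∑ i, (c i)^2 := by norm_num

lemma cs2 (a b : Fin 3 → Fin 3 → ℝ) :
    (∑ i, ∑ j, a i j * b i j)^2
      ≤ (∑ i, ∑ j, (a i j)^2) * (∑ i, ∑ j, (b i j)^2) := by
  classical
  have h := Finset.sum_mul_sq_le_sq_mul_sq (Finset.univ : Finset (Fin 3 × Fin 3))
    (fun p => a p.1 p.2) (fun p => b p.1 p.2)
  rw [← Finset.univ_product_univ, Finset.sum_product, Finset.sum_product,
    Finset.sum_product] at h
  exact h

lemma abs_le_of_sq_le {t c : ℝ} (hc : 0 ≤ c) (h : t^2 ≤ c^2) : |t| ≤ c := by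
  have := Real.sqrt_le_sqrt h
  rwa [Real.sqrt_sq_eq_abs, Real.sqrt_sq hc] at this

lemma interp {u : V3 → ℝ} (hu : ContDiff ℝ (⊤ : ℕ∞) u) (hp : Per u) {A : ℝ} (hA : 0 ≤ A)
    (hb : ∀ x, |u x| ≤ A) :
    (∫ x in Q3, (∑ i : Fin 3, (pd i u x)^2)^2)
      ≤ 16 * A^2 * ∑ i : Fin 3, ∑ j : Fin 3, ∫ x in Q3, (pd i (pd j u) x)^2 := by
  have hsm : ∀ i : Fin 3, ContDiff ℝ (⊤ : ℕ∞) (pd i u) := fun i => contDiff_pd hu i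
  have hpe : ∀ i : Fin 3, Per (pd i u) := fun i => per_pd hu hp i
  have hsm2 : ∀ i j : Fin 3, ContDiff ℝ (⊤ : ℕ∞) (pd i (pd j u)) :=
    fun i j => contDiff_pd (hsm j) i
  set G : V3 → ℝ := fun x => ∑ i : Fin 3, (pd i u x)^2 with hG
  have hGsm : ContDiff ℝ (⊤ : ℕ∞) G := by
    apply ContDiff.sum (fun i _ => ?_)
    simpa [sq] using (hsm i).mul (hsm i)
  have hGper : Per G := by
    intro x j
    simp only [hG]
    exact Finset.sum_congr rfl (fun i _ => by rw [hpe i x j])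
  have hGnn : ∀ x, 0 ≤ G x := fun x => Finset.sum_nonneg (fun i _ => sq_nonneg _)
  set h : V3 → ℝ := fun x =>
    Real.sqrt (∑ i : Fin 3, ∑ j : Fin 3, (pd i (pd j u) x)^2) with hh
  have hhnn : ∀ x, 0 ≤ h x := fun x => Real.sqrt_nonneg _
  have hhsq : ∀ x, (h x)^2 = ∑ i : Fin 3, ∑ j : Fin 3, (pd i (pd j u) x)^2 :=
    fun x => Real.sq_sqrt (Finset.sum_nonneg fun i _ =>
      Finset.sum_nonneg fun j _ => sq_nonneg _)
  have hhcont : Continuous h := by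
    apply Real.continuous_sqrt.comp
    exact continuous_finset_sum _ (fun i _ => continuous_finset_sum _ (fun j _ => by
      simpa [sq] using ((hsm2 i j).continuous.fun_mul (hsm2 i j).continuous)))
  set X := ∫ x in Q3, (G x)^2 with hX
  have hXnn : 0 ≤ X := intQ3_nonneg (fun x => sq_nonneg _)
  set H := ∑ i : Fin 3, ∑ j : Fin 3, ∫ x in Q3, (pd i (pd j u) x)^2 with hH
  have hHnn : 0 ≤ H := Finset.sum_nonneg fun i _ => Finset.sum_nonneg fun j _ =>
    intQ3_nonneg (fun x => sq_nonneg _)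
  have hih2 : (∫ x in Q3, (h x)^2) = H := by
    rw [setInt_congr hhsq]
    rw [MeasureTheory.integral_finset_sum _ (fun i _ => integrableOn_Q3
      (continuous_finset_sum _ (fun j _ => (hsm2 i j).continuous.fun_pow 2)))]
    exact Finset.sum_congr rfl (fun i _ => MeasureTheory.integral_finset_sum _
      (fun j _ => integrableOn_Q3 ((hsm2 i j).continuous.fun_pow 2)))
  -- Step 1: ∫ G² = ∑_i ∫ pd i u * (pd i u * G)
  have step1 : X = ∑ i : Fin 3, ∫ x in Q3, pd i u x * (pd i u x * G x) := by
    rw [hX, ← MeasureTheory.integral_finset_sum _ (fun i _ => integrableOn_Q3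
      ((hsm i).continuous.fun_mul ((hsm i).continuous.fun_mul hGsm.continuous)))]
    refine setInt_congr (fun x => ?_)
    rw [sq, hG, Finset.sum_mul]
    exact Finset.sum_congr rfl (fun i _ => by ring)
  -- Step 2: IBP each term
  have step2 : ∀ i : Fin 3, (∫ x in Q3, pd i u x * (pd i u x * G x))
      = -∫ x in Q3, u x * pd i (fun y => pd i u y * G y) x := by
    intro i
    exact ibp hu ((hsm i).mul hGsm) hp (per_mul (hpe i) hGper) i
  have hDsm : ∀ i : Fin 3, ContDiff ℝ (⊤ : ℕ∞) (pd i (fun y => pd i u y * G y)) :=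
    fun i => contDiff_pd ((hsm i).mul hGsm) i
  have step12 : X = -∫ x in Q3,
      ∑ i : Fin 3, u x * pd i (fun y => pd i u y * G y) x := by
    rw [step1, MeasureTheory.integral_finset_sum _ (fun i _ => integrableOn_Q3
      (hu.continuous.fun_mul (hDsm i).continuous)), ← Finset.sum_neg_distrib]
    exact Finset.sum_congr rfl (fun i _ => step2 i)
  -- pointwise derivative expansions
  have hpdG : ∀ (i : Fin 3) (x : V3),
      pd i G x = ∑ j : Fin 3, 2 * (pd j u x * pd i (pd j u) x) := by
    intro i x
    have hfe : G = fun y => ∑ j : Fin 3, pd j u y * pd j u y := by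
      funext y
      exact Finset.sum_congr rfl (fun j _ => by rw [sq])
    have h1 : pd i G x = ∑ j : Fin 3, pd i (fun y => pd j u y * pd j u y) x := by
      rw [hfe]
      exact pd_sum Finset.univ _ i x (fun j _ => diffAt ((hsm j).mul (hsm j)) x)
    rw [h1]
    refine Finset.sum_congr rfl (fun j _ => ?_)
    rw [pd_mul i x (diffAt (hsm j) x) (diffAt (hsm j) x)]
    ring
  have hexp : ∀ (i : Fin 3) (x : V3),
      pd i (fun y => pd i u y * G y) x
        = pd i u x * pd i G x + G x * pd i (pd i u) x := by
    intro i x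
    exact pd_mul i x (diffAt (hsm i) x) (diffAt hGsm x)
  -- Step 3: pointwise bound
  have step3 : ∀ x : V3,
      |∑ i : Fin 3, u x * pd i (fun y => pd i u y * G y) x|
        ≤ (4 * A) * (h x * G x) := by
    intro x
    set S := ∑ i : Fin 3, ∑ j : Fin 3,
      (pd i u x * pd j u x) * pd i (pd j u) x with hS
    set D := ∑ i : Fin 3, pd i (pd i u) x with hD
    have hsum : (∑ i : Fin 3, u x * pd i (fun y => pd i u y * G y) x)
        = u x * (2 * S + G x * D) := by
      rw [← Finset.mul_sum]
      congr 1
      have e1 : (∑ i : Fin 3, pd i (fun y => pd i u y * G y) x)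
          = (∑ i : Fin 3, pd i u x * pd i G x) + G x * D := by
        rw [hD, Finset.mul_sum, ← Finset.sum_add_distrib]
        exact Finset.sum_congr rfl (fun i _ => hexp i x)
      rw [e1]
      have e2 : (∑ i : Fin 3, pd i u x * pd i G x) = 2 * S := by
        rw [hS, Finset.mul_sum]
        refine Finset.sum_congr rfl (fun i _ => ?_)
        rw [hpdG i x, Finset.mul_sum, Finset.mul_sum]
        exact Finset.sum_congr rfl (fun j _ => by ring)
      rw [e2]
    rw [hsum]
    have h1 : |S| ≤ G x * h x := by
      refine abs_le_of_sq_le (mul_nonneg (hGnn x) (hhnn x)) ?_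
      calc S^2 ≤ (∑ i : Fin 3, ∑ j : Fin 3, (pd i u x * pd j u x)^2)
            * (∑ i : Fin 3, ∑ j : Fin 3, (pd i (pd j u) x)^2) := cs2 _ _
        _ = (G x)^2 * (h x)^2 := by
            rw [hhsq x]
            congr 1
            rw [hG, sq, Finset.sum_mul_sum]
            exact Finset.sum_congr rfl (fun i _ => Finset.sum_congr rfl
              (fun j _ => mul_pow _ _ 2))
        _ = (G x * h x)^2 := (mul_pow _ _ 2).symm
    have h2 : |D| ≤ 2 * h x := by
      refine abs_le_of_sq_le (by positivity) ?_
      calc D^2 ≤ 3 * ∑ i : Fin 3, (pd i (pd i u) x)^2 := cs1 _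
        _ ≤ 3 * ∑ i : Fin 3, ∑ j : Fin 3, (pd i (pd j u) x)^2 := by
            have : (∑ i : Fin 3, (pd i (pd i u) x)^2)
                ≤ ∑ i : Fin 3, ∑ j : Fin 3, (pd i (pd j u) x)^2 :=
              Finset.sum_le_sum (fun i _ => Finset.single_le_sum
                (f := fun j => (pd i (pd j u) x)^2)
                (fun j _ => sq_nonneg _) (Finset.mem_univ i))
            linarith
        _ = 3 * (h x)^2 := by rw [hhsq x]
        _ ≤ (2 * h x)^2 := by nlinarith [hhnn x]
    calc |u x * (2 * S + G x * D)| = |u x| * |2 * S + G x * D| := abs_mul _ _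
      _ ≤ A * (2 * |S| + G x * |D|) := by
          refine mul_le_mul (hb x) ?_ (abs_nonneg _) hA
          calc |2 * S + G x * D| ≤ |2 * S| + |G x * D| := abs_add_le _ _
            _ = 2 * |S| + G x * |D| := by
                rw [abs_mul, abs_mul, abs_of_nonneg (hGnn x)]
                norm_num
      _ ≤ A * (2 * (G x * h x) + G x * (2 * h x)) := by
          refine mul_le_mul_of_nonneg_left ?_ hA
          have := h1; have := h2
          nlinarith [hGnn x]
      _ = (4 * A) * (h x * G x) := by ring
  -- Put everything together
  have hWcont : Continuous (fun x => ∑ i : Fin 3,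
      u x * pd i (fun y => pd i u y * G y) x) :=
    continuous_finset_sum _ (fun i _ => hu.continuous.mul (hDsm i).continuous)
  have main : X ≤ (4 * A) * ((∫ x in Q3, h x * G x)) := by
    rw [step12]
    have habs : (-∫ x in Q3, ∑ i : Fin 3, u x * pd i (fun y => pd i u y * G y) x)
        ≤ ∫ x in Q3, |∑ i : Fin 3, u x * pd i (fun y => pd i u y * G y) x| := by
      have hni := MeasureTheory.norm_integral_le_integral_norm
        (f := fun x => ∑ i : Fin 3, u x * pd i (fun y => pd i u y * G y) x)
        (μ := MeasureTheory.volume.restrict Q3)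
      simp only [Real.norm_eq_abs] at hni
      calc (-∫ x in Q3, ∑ i : Fin 3, u x * pd i (fun y => pd i u y * G y) x)
          ≤ |∫ x in Q3, ∑ i : Fin 3, u x * pd i (fun y => pd i u y * G y) x| :=
            neg_le_abs _
        _ ≤ _ := hni
    refine habs.trans ?_
    have hmono : (∫ x in Q3, |∑ i : Fin 3, u x * pd i (fun y => pd i u y * G y) x|)
        ≤ ∫ x in Q3, (4 * A) * (h x * G x) :=
      intQ3_mono hWcont.abs (continuous_const.mul (hhcont.mul hGsm.continuous))
        step3
    refine hmono.trans ?_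
    rw [MeasureTheory.integral_const_mul]
  have hCS : (∫ x in Q3, h x * G x)
      ≤ Real.sqrt (∫ x in Q3, (h x)^2) * Real.sqrt X :=
    L2CS hhcont hGsm.continuous
  rw [hih2] at hCS
  have hfin : X ≤ (4 * A) * (Real.sqrt H * Real.sqrt X) := by
    refine main.trans ?_
    have h4A : 0 ≤ 4 * A := by linarith
    exact mul_le_mul_of_nonneg_left hCS h4A
  have hsX : Real.sqrt X ^ 2 = X := Real.sq_sqrt hXnn
  have hsH : Real.sqrt H ^ 2 = H := Real.sq_sqrt hHnn
  nlinarith [Real.sqrt_nonneg X, Real.sqrt_nonneg H, hfin, hsX, hsH, hA,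
    sq_nonneg (Real.sqrt X - 4 * A * Real.sqrt H)]

end Aux5
set_option maxHeartbeats 2000000 in
/-- the elliptic `H²`-estimate for the potential. For every `K, M > 0`
there exist `ε₀ > 0` and `C > 0` such that for every `ε ∈ [0, ε₀]`, any smooth
`2π`-periodic solution of `−div((Id + ε n⊗n)∇Φ) = g` with `|n| ≤ 1`, `|Φ| ≤ K` and
`∫_Q g² ≤ M²` satisfies `∫_Q |ΔΦ|² ≤ ¼ ∫_Q |Δn|² + C`. -/
theorem stmt14 (K M : ℝ) (hK : 0 < K) (hM : 0 < M) :
    ∃ ε₀ > (0:ℝ), ∃ C > (0:ℝ), ∀ ε ∈ Set.Icc (0:ℝ) ε₀,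
      ∀ (Φ g : V3 → ℝ) (n : V3 → V3),
      ContDiff ℝ (⊤ : ℕ∞) Φ → ContDiff ℝ (⊤ : ℕ∞) g → ContDiff ℝ (⊤ : ℕ∞) n →
      Per Φ → Per g → Per n →
      (∀ x, dot (n x) (n x) ≤ 1) →
      (∀ x, |Φ x| ≤ K) →
      (∫ x in Q3, (g x)^2) ≤ M^2 →
      (∀ x, -divg (fun y => mv (matA ε (n y)) (grad Φ y)) x = g x) →
      (∫ x in Q3, (lap Φ x)^2)
        ≤ (1/4) * (∫ x in Q3, dot (lapV n x) (lapV n x)) + C := by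
  refine ⟨min (1/(2*(9*K+1))) (1/120), lt_min (by positivity) (by norm_num),
    8*M^2, by positivity, ?_⟩
  rintro ε ⟨hε0, hεtop⟩ Φ g n hΦ hg hn hΦp hgp hnp hn1 hΦK hgM hPDE
  have hεK : ε * (9*K+1) ≤ 1/2 := by
    have h1 : ε ≤ 1/(2*(9*K+1)) := le_trans hεtop (min_le_left _ _)
    have h2 : (0:ℝ) < 2*(9*K+1) := by positivity
    rw [le_div_iff₀ h2] at h1
    nlinarith
  have hε120 : ε ≤ 1/120 := le_trans hεtop (min_le_right _ _)
  -- components of n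
  have hnk : ∀ k : Fin 3, ContDiff ℝ (⊤ : ℕ∞) (fun y => n y k) := fun k => contDiff_pi.mp hn k
  have hnkp : ∀ k : Fin 3, Per (fun y => n y k) := fun k x i => congrFun (hnp x i) k
  have hnk1 : ∀ (x : V3) (k : Fin 3), |n x k| ≤ 1 := by
    intro x k
    refine abs_le_of_sq_le zero_le_one ?_
    have h1 : (n x k)^2 ≤ ∑ j : Fin 3, n x j * n x j := by
      have h0 := Finset.single_le_sum (f := fun j => n x j * n x j)
        (fun j _ => mul_self_nonneg _) (Finset.mem_univ k)
      simpa [pow_two] using h0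
    have h2 := hn1 x
    unfold dot at h2
    nlinarith
  -- the auxiliary scalar field m = n · ∇Φ
  set m : V3 → ℝ := fun y => ∑ j : Fin 3, n y j * pd j Φ y with hm
  have hmsm : ContDiff ℝ (⊤ : ℕ∞) m :=
    ContDiff.sum (fun j _ => (hnk j).mul (contDiff_pd hΦ j))
  have hFi : ∀ i : Fin 3, ContDiff ℝ (⊤ : ℕ∞) (fun y => n y i * m y) :=
    fun i => (hnk i).mul hmsm
  set R : V3 → ℝ := fun x => ∑ i : Fin 3, pd i (fun y => n y i * m y) x with hR
  have hRcont : Continuous R :=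
    continuous_finset_sum _ (fun i _ => (contDiff_pd (hFi i) i).continuous)
  -- the PDE pointwise
  have hlap : ∀ x, lap Φ x = -g x - ε * R x := by
    intro x
    have hPDEx := hPDE x
    have hcomp : ∀ i : Fin 3, (fun y => mv (matA ε (n y)) (grad Φ y) i)
        = fun y => pd i Φ y + ε * (n y i * m y) := by
      intro i; funext y
      have h1 : ∀ j, matA ε (n y) i j
          = (if i = j then (1:ℝ) else 0) + ε * (n y i * n y j) := by
        intro j
        simp [matA, outer, Matrix.one_apply, Matrix.add_apply, Matrix.smul_apply,
          smul_eq_mul]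
      calc mv (matA ε (n y)) (grad Φ y) i
          = ∑ j : Fin 3, matA ε (n y) i j * grad Φ y j := rfl
        _ = ∑ j : Fin 3, ((if i = j then (1:ℝ) else 0) * pd j Φ y
              + ε * (n y i * (n y j * pd j Φ y))) := by
            refine Finset.sum_congr rfl (fun j _ => ?_)
            rw [h1 j]
            show _ * pd j Φ y = _
            ring
        _ = (∑ j : Fin 3, (if i = j then (1:ℝ) else 0) * pd j Φ y)
              + ∑ j : Fin 3, ε * (n y i * (n y j * pd j Φ y)) :=
            Finset.sum_add_distrib
        _ = pd i Φ y + ε * (n y i * m y) := by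
            congr 1
            · simp [ite_mul]
            · rw [hm, Finset.mul_sum, Finset.mul_sum]
    have hdiv : divg (fun y => mv (matA ε (n y)) (grad Φ y)) x = lap Φ x + ε * R x := by
      calc divg (fun y => mv (matA ε (n y)) (grad Φ y)) x
          = ∑ i : Fin 3, pd i (fun y => pd i Φ y + ε * (n y i * m y)) x := by
            unfold divg
            exact Finset.sum_congr rfl (fun i _ => by rw [hcomp i])
        _ = ∑ i : Fin 3, (pd i (pd i Φ) x + ε * pd i (fun y => n y i * m y) x) := by
            refine Finset.sum_congr rfl (fun i _ => ?_)
            rw [pd_add i x (diffAt (contDiff_pd hΦ i) x)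
              (diffAt (contDiff_const.mul (hFi i)) x),
              pd_const_mul ε i x (diffAt (hFi i) x)]
        _ = lap Φ x + ε * R x := by
            rw [Finset.sum_add_distrib, ← Finset.mul_sum, hR]
            rfl
    rw [hdiv] at hPDEx
    linarith
  -- gradient-square quantities
  set gn : V3 → ℝ := fun x => ∑ k : Fin 3, ∑ i : Fin 3,
    (pd i (fun y => n y k) x)^2 with hgn
  set gP : V3 → ℝ := fun x => ∑ i : Fin 3, (pd i Φ x)^2 with hgP
  set hP : V3 → ℝ := fun x =>
    Real.sqrt (∑ i : Fin 3, ∑ j : Fin 3, (pd i (pd j Φ) x)^2) with hhP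
  have hgncont : Continuous gn :=
    continuous_finset_sum _ (fun k _ => continuous_finset_sum _
      (fun i _ => ((contDiff_pd (hnk k) i).continuous.pow 2)))
  have hgPcont : Continuous gP :=
    continuous_finset_sum _ (fun i _ => ((contDiff_pd hΦ i).continuous.pow 2))
  have hgnnn : ∀ x, 0 ≤ gn x := fun x => Finset.sum_nonneg (fun k _ =>
    Finset.sum_nonneg (fun i _ => sq_nonneg _))
  have hgPnn : ∀ x, 0 ≤ gP x := fun x => Finset.sum_nonneg (fun i _ => sq_nonneg _)
  have hhPnn : ∀ x, 0 ≤ hP x := fun x => Real.sqrt_nonneg _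
  have hhPsq : ∀ x, (hP x)^2 = ∑ i : Fin 3, ∑ j : Fin 3, (pd i (pd j Φ) x)^2 :=
    fun x => Real.sq_sqrt (Finset.sum_nonneg fun i _ =>
      Finset.sum_nonneg fun j _ => sq_nonneg _)
  have hhPcont : Continuous hP := by
    apply Real.continuous_sqrt.comp
    exact continuous_finset_sum _ (fun i _ => continuous_finset_sum _
      (fun j _ => (contDiff_pd (contDiff_pd hΦ j) i).continuous.pow 2))
  -- expansion of R
  have hRx : ∀ x, R x = m x * (∑ i : Fin 3, pd i (fun y => n y i) x)
      + ((∑ i : Fin 3, ∑ j : Fin 3, (n x i * n x j) * pd i (pd j Φ) x)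
      + (∑ i : Fin 3, ∑ j : Fin 3, (n x i * pd i (fun y => n y j) x) * pd j Φ x)) := by
    intro x
    have hterm : ∀ i : Fin 3, pd i (fun y => n y i * m y) x
        = m x * pd i (fun y => n y i) x
          + ∑ j : Fin 3, ((n x i * n x j) * pd i (pd j Φ) x
            + (n x i * pd i (fun y => n y j) x) * pd j Φ x) := by
      intro i
      rw [pd_mul i x (diffAt (hnk i) x) (diffAt hmsm x)]
      have hpm : pd i m x = ∑ j : Fin 3,
          (n x j * pd i (pd j Φ) x + pd j Φ x * pd i (fun y => n y j) x) := by
        rw [hm, pd_sum Finset.univ (fun j => fun y => n y j * pd j Φ y) i x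
          (fun j _ => diffAt ((hnk j).mul (contDiff_pd hΦ j)) x)]
        exact Finset.sum_congr rfl (fun j _ =>
          pd_mul i x (diffAt (hnk j) x) (diffAt (contDiff_pd hΦ j) x))
      rw [hpm, Finset.mul_sum, add_comm]
      congr 1
      exact Finset.sum_congr rfl (fun j _ => by ring)
    rw [hR]
    calc (∑ i : Fin 3, pd i (fun y => n y i * m y) x)
        = ∑ i : Fin 3, (m x * pd i (fun y => n y i) x
          + ∑ j : Fin 3, ((n x i * n x j) * pd i (pd j Φ) x
            + (n x i * pd i (fun y => n y j) x) * pd j Φ x)) :=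
          Finset.sum_congr rfl (fun i _ => hterm i)
      _ = _ := by
          rw [Finset.sum_add_distrib, ← Finset.mul_sum]
          congr 1
          rw [← Finset.sum_add_distrib]
          exact Finset.sum_congr rfl (fun i _ => Finset.sum_add_distrib)
  -- pointwise bound on R
  have hRb : ∀ x, |R x| ≤ 3 * (Real.sqrt (gn x) * Real.sqrt (gP x)) + hP x := by
    intro x
    rw [hRx x]
    have hmb : |m x| ≤ Real.sqrt (gP x) := by
      refine abs_le_of_sq_le (Real.sqrt_nonneg _) ?_
      rw [Real.sq_sqrt (hgPnn x)]
      have h1 : (m x)^2 ≤ (∑ j : Fin 3, (n x j)^2) * (∑ j : Fin 3, (pd j Φ x)^2) := by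
        rw [hm]
        exact Finset.sum_mul_sq_le_sq_mul_sq Finset.univ _ _
      have h2 : (∑ j : Fin 3, (n x j)^2) ≤ 1 := by
        have := hn1 x
        unfold dot at this
        calc (∑ j : Fin 3, (n x j)^2) = ∑ j : Fin 3, n x j * n x j :=
            Finset.sum_congr rfl (fun j _ => sq (n x j) ▸ by ring)
          _ ≤ 1 := this
      rw [hgP]
      nlinarith [hgPnn x]
    have hdb : |∑ i : Fin 3, pd i (fun y => n y i) x| ≤ 2 * Real.sqrt (gn x) := by
      refine abs_le_of_sq_le (by positivity) ?_
      have h1 : (∑ i : Fin 3, pd i (fun y => n y i) x)^2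
          ≤ 3 * ∑ i : Fin 3, (pd i (fun y => n y i) x)^2 := cs1 _
      have h2 : (∑ i : Fin 3, (pd i (fun y => n y i) x)^2) ≤ gn x := by
        show _ ≤ ∑ k : Fin 3, ∑ i : Fin 3, (pd i (fun y => n y k) x)^2
        exact Finset.sum_le_sum (fun i _ => Finset.single_le_sum
          (f := fun i' => (pd i' (fun y => n y i) x)^2)
          (fun i' _ => sq_nonneg _) (Finset.mem_univ i))
      have h3 : (Real.sqrt (gn x))^2 = gn x := Real.sq_sqrt (hgnnn x)
      nlinarith [hgnnn x]
    have hT2 : |∑ i : Fin 3, ∑ j : Fin 3, (n x i * n x j) * pd i (pd j Φ) x| ≤ hP x := by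
      refine abs_le_of_sq_le (hhPnn x) ?_
      have h1 := cs2 (fun i j => n x i * n x j) (fun i j => pd i (pd j Φ) x)
      have h2 : (∑ i : Fin 3, ∑ j : Fin 3, (n x i * n x j)^2) ≤ 1 := by
        have hs : (∑ i : Fin 3, ∑ j : Fin 3, (n x i * n x j)^2)
            = (∑ i : Fin 3, (n x i)^2) * (∑ j : Fin 3, (n x j)^2) := by
          rw [Finset.sum_mul_sum]
          exact Finset.sum_congr rfl (fun i _ => Finset.sum_congr rfl
            (fun j _ => mul_pow _ _ 2))
        have h2' : (∑ j : Fin 3, (n x j)^2) ≤ 1 := by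
          have := hn1 x
          unfold dot at this
          calc (∑ j : Fin 3, (n x j)^2) = ∑ j : Fin 3, n x j * n x j :=
              Finset.sum_congr rfl (fun j _ => sq (n x j) ▸ by ring)
            _ ≤ 1 := this
        have h2'' : (0:ℝ) ≤ ∑ j : Fin 3, (n x j)^2 :=
          Finset.sum_nonneg (fun j _ => sq_nonneg _)
        rw [hs]; nlinarith
      have h3 := hhPsq x
      nlinarith [Finset.sum_nonneg (fun i (_ : i ∈ Finset.univ) =>
        Finset.sum_nonneg (fun j (_ : j ∈ Finset.univ) =>
          sq_nonneg (pd i (pd j Φ) x)))]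
    have hT3 : |∑ i : Fin 3, ∑ j : Fin 3, (n x i * pd i (fun y => n y j) x) * pd j Φ x|
        ≤ Real.sqrt (gn x) * Real.sqrt (gP x) := by
      refine abs_le_of_sq_le (by positivity) ?_
      have hre : (∑ i : Fin 3, ∑ j : Fin 3, (n x i * pd i (fun y => n y j) x) * pd j Φ x)
          = ∑ j : Fin 3, (∑ i : Fin 3, n x i * pd i (fun y => n y j) x) * pd j Φ x := by
        rw [Finset.sum_comm]
        exact Finset.sum_congr rfl (fun j _ => (Finset.sum_mul _ _ _).symm)
      rw [hre]
      have h1 := Finset.sum_mul_sq_le_sq_mul_sq Finset.univ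
        (fun j => ∑ i : Fin 3, n x i * pd i (fun y => n y j) x)
        (fun j => pd j Φ x)
      have h2 : (∑ j : Fin 3, (∑ i : Fin 3, n x i * pd i (fun y => n y j) x)^2)
          ≤ gn x := by
        show _ ≤ ∑ k : Fin 3, ∑ i : Fin 3, (pd i (fun y => n y k) x)^2
        refine Finset.sum_le_sum (fun j _ => ?_)
        have hcs := Finset.sum_mul_sq_le_sq_mul_sq Finset.univ
          (fun i => n x i) (fun i => pd i (fun y => n y j) x)
        have hn2 : (∑ i : Fin 3, (n x i)^2) ≤ 1 := by
          have := hn1 x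
          unfold dot at this
          calc (∑ i : Fin 3, (n x i)^2) = ∑ i : Fin 3, n x i * n x i :=
              Finset.sum_congr rfl (fun i _ => sq (n x i) ▸ by ring)
            _ ≤ 1 := this
        have hpos : (0:ℝ) ≤ ∑ i : Fin 3, (pd i (fun y => n y j) x)^2 :=
          Finset.sum_nonneg (fun i _ => sq_nonneg _)
        nlinarith
      have h3 : (Real.sqrt (gn x))^2 = gn x := Real.sq_sqrt (hgnnn x)
      have h4 : (Real.sqrt (gP x))^2 = gP x := Real.sq_sqrt (hgPnn x)
      have h5 : (0:ℝ) ≤ gP x := hgPnn x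
      calc (∑ j : Fin 3, (∑ i : Fin 3, n x i * pd i (fun y => n y j) x) * pd j Φ x)^2
          ≤ (∑ j : Fin 3, (∑ i : Fin 3, n x i * pd i (fun y => n y j) x)^2)
            * (∑ j : Fin 3, (pd j Φ x)^2) := h1
        _ ≤ gn x * gP x := by
            refine mul_le_mul h2 ?_ (Finset.sum_nonneg (fun j _ => sq_nonneg _)) (hgnnn x)
            rw [hgP]
        _ = (Real.sqrt (gn x) * Real.sqrt (gP x))^2 := by
            rw [mul_pow, h3, h4]
    calc |m x * (∑ i : Fin 3, pd i (fun y => n y i) x)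
        + ((∑ i : Fin 3, ∑ j : Fin 3, (n x i * n x j) * pd i (pd j Φ) x)
        + (∑ i : Fin 3, ∑ j : Fin 3, (n x i * pd i (fun y => n y j) x) * pd j Φ x))|
        ≤ |m x * (∑ i : Fin 3, pd i (fun y => n y i) x)|
          + (|∑ i : Fin 3, ∑ j : Fin 3, (n x i * n x j) * pd i (pd j Φ) x|
          + |∑ i : Fin 3, ∑ j : Fin 3, (n x i * pd i (fun y => n y j) x) * pd j Φ x|) :=
          (abs_add_le _ _).trans (by gcongr; exact abs_add_le _ _)
      _ ≤ 3 * (Real.sqrt (gn x) * Real.sqrt (gP x)) + hP x := by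
          rw [abs_mul]
          have := mul_le_mul hmb hdb (abs_nonneg _) (Real.sqrt_nonneg _)
          nlinarith [hT2, hT3, this]
    -- continuity of the Laplacians
  have hlapc : Continuous (lap Φ) := by
    have he : lap Φ = fun x => ∑ i : Fin 3, pd i (pd i Φ) x := rfl
    rw [he]
    exact continuous_finset_sum _
      (fun i _ => (contDiff_pd (contDiff_pd hΦ i) i).continuous)
  have hlapnc : ∀ k : Fin 3, Continuous (lap (fun y => n y k)) := by
    intro k
    have he : lap (fun y => n y k) = fun x => ∑ i : Fin 3,
        pd i (pd i (fun y => n y k)) x := rfl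
    rw [he]
    exact continuous_finset_sum _
      (fun i _ => (contDiff_pd (contDiff_pd (hnk k) i) i).continuous)
  -- main quantities
  set a2 := ∫ x in Q3, (lap Φ x)^2 with ha2
  have ha2nn : 0 ≤ a2 := intQ3_nonneg (fun x => sq_nonneg _)
  set α := Real.sqrt a2 with hα
  have hαnn : 0 ≤ α := Real.sqrt_nonneg _
  have hα2 : α^2 = a2 := Real.sq_sqrt ha2nn
  set HP := ∑ i : Fin 3, ∑ j : Fin 3, ∫ x in Q3, (pd i (pd j Φ) x)^2 with hHP
  have hlapid : a2 = HP := lap_identity hΦ hΦp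
  set b2 := ∫ x in Q3, dot (lapV n x) (lapV n x) with hb2
  have hb2sum : b2 = ∑ k : Fin 3, ∫ x in Q3, (lap (fun y => n y k) x)^2 := by
    rw [hb2, ← MeasureTheory.integral_finset_sum _
      (fun k _ => integrableOn_Q3 ((hlapnc k).fun_pow 2))]
    refine setInt_congr (fun x => ?_)
    unfold dot lapV
    exact Finset.sum_congr rfl (fun k _ => by rw [sq])
  have hb2nn : 0 ≤ b2 := by
    rw [hb2sum]
    exact Finset.sum_nonneg (fun k _ => intQ3_nonneg (fun x => sq_nonneg _))
  set q := Real.sqrt b2 with hq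
  have hqnn : 0 ≤ q := Real.sqrt_nonneg _
  have hq2 : q^2 = b2 := Real.sq_sqrt hb2nn
  have hihP2 : (∫ x in Q3, (hP x)^2) = HP := by
    rw [setInt_congr hhPsq, MeasureTheory.integral_finset_sum _
      (fun i _ => integrableOn_Q3 (continuous_finset_sum _
        (fun j _ => (contDiff_pd (contDiff_pd hΦ j) i).continuous.fun_pow 2)))]
    exact Finset.sum_congr rfl (fun i _ => MeasureTheory.integral_finset_sum _
      (fun j _ => integrableOn_Q3 ((contDiff_pd (contDiff_pd hΦ j) i).continuous.fun_pow 2)))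
  set Bf : V3 → ℝ := fun x => 3 * (Real.sqrt (gn x) * Real.sqrt (gP x)) + hP x with hBf
  have hsgn : Continuous (fun x => Real.sqrt (gn x)) := Real.continuous_sqrt.comp hgncont
  have hsgP : Continuous (fun x => Real.sqrt (gP x)) := Real.continuous_sqrt.comp hgPcont
  have hsprod : Continuous (fun x => Real.sqrt (gn x) * Real.sqrt (gP x)) := hsgn.mul hsgP
  have hBfc : Continuous Bf := by
    refine Continuous.add ?_ hhPcont
    exact continuous_const.mul hsprod
  -- step A : a2 ≤ ∫ |lapΦ||g| + ε ∫ |lapΦ| Bf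
  have e0 : a2 = ∫ x in Q3, lap Φ x * (-g x - ε * R x) := by
    rw [ha2]
    exact setInt_congr (fun x => by linear_combination (lap Φ x) * hlap x)
  have e1 : a2 ≤ (∫ x in Q3, |lap Φ x| * |g x|)
      + ε * ∫ x in Q3, |lap Φ x| * Bf x := by
    rw [e0]
    have hmono : (∫ x in Q3, lap Φ x * (-g x - ε * R x))
        ≤ ∫ x in Q3, (|lap Φ x| * |g x| + ε * (|lap Φ x| * Bf x)) := by
      refine intQ3_mono (hlapc.mul ((hg.continuous.neg).sub
        (continuous_const.mul hRcont))) ((hlapc.abs.mul hg.continuous.abs).add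
        (continuous_const.mul (hlapc.abs.mul hBfc))) (fun x => ?_)
      have h2 : |(-g x - ε * R x)| ≤ |g x| + ε * |R x| := by
        calc |(-g x - ε * R x)| = |(-g x) + (-(ε * R x))| := by rw [sub_eq_add_neg]
          _ ≤ |(-g x)| + |(-(ε * R x))| := abs_add_le _ _
          _ = |g x| + ε * |R x| := by
              rw [abs_neg, abs_neg, abs_mul, abs_of_nonneg hε0]
      have h3 : |R x| ≤ Bf x := hRb x
      calc lap Φ x * (-g x - ε * R x) ≤ |lap Φ x * (-g x - ε * R x)| :=
            le_abs_self _
        _ = |lap Φ x| * |(-g x - ε * R x)| := abs_mul _ _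
        _ ≤ |lap Φ x| * (|g x| + ε * |R x|) :=
            mul_le_mul_of_nonneg_left h2 (abs_nonneg _)
        _ = |lap Φ x| * |g x| + ε * (|lap Φ x| * |R x|) := by ring
        _ ≤ |lap Φ x| * |g x| + ε * (|lap Φ x| * Bf x) := by
            refine add_le_add_right (mul_le_mul_of_nonneg_left ?_ hε0) _
            exact mul_le_mul_of_nonneg_left h3 (abs_nonneg _)
    refine hmono.trans ?_
    rw [MeasureTheory.integral_add (integrableOn_Q3 (hlapc.abs.fun_mul hg.continuous.abs))
      ((integrableOn_Q3 (hlapc.abs.fun_mul hBfc)).const_mul ε),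
      MeasureTheory.integral_const_mul]
  -- step B : ∫ |lapΦ||g| ≤ α M
  have e3 : (∫ x in Q3, |lap Φ x| * |g x|) ≤ α * M := by
    have h := L2CS hlapc.abs hg.continuous.abs
    rw [setInt_congr (fun x => sq_abs (lap Φ x)),
      setInt_congr (fun x => sq_abs (g x))] at h
    refine h.trans ?_
    have h2 : Real.sqrt (∫ x in Q3, (g x)^2) ≤ M := by
      have := Real.sqrt_le_sqrt hgM
      rwa [Real.sqrt_sq hM.le] at this
    exact mul_le_mul_of_nonneg_left h2 hαnn
  -- step C : ∫ |lapΦ| Bf ≤ 3 α √W + α²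
  set W := ∫ x in Q3, gn x * gP x with hW
  have hWnn : 0 ≤ W := intQ3_nonneg (fun x => mul_nonneg (hgnnn x) (hgPnn x))
  have e4 : (∫ x in Q3, |lap Φ x| * Bf x)
      = 3 * (∫ x in Q3, |lap Φ x| * (Real.sqrt (gn x) * Real.sqrt (gP x)))
        + ∫ x in Q3, |lap Φ x| * hP x := by
    rw [← MeasureTheory.integral_const_mul, ← MeasureTheory.integral_add
      ((integrableOn_Q3 (hlapc.abs.fun_mul hsprod)).const_mul 3)
      (integrableOn_Q3 (hlapc.abs.fun_mul hhPcont))]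
    exact setInt_congr (fun x => by rw [hBf]; ring)
  have e5 : (∫ x in Q3, |lap Φ x| * hP x) ≤ α * α := by
    have h := L2CS hlapc.abs hhPcont
    rw [setInt_congr (fun x => sq_abs (lap Φ x)), hihP2] at h
    refine h.trans ?_
    rw [← hlapid]
  have e6 : (∫ x in Q3, |lap Φ x| * (Real.sqrt (gn x) * Real.sqrt (gP x)))
      ≤ α * Real.sqrt W := by
    have h := L2CS hlapc.abs hsprod
    rw [setInt_congr (fun x => sq_abs (lap Φ x))] at h
    have h2 : (∫ x in Q3, (Real.sqrt (gn x) * Real.sqrt (gP x))^2) = W := by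
      refine setInt_congr (fun x => ?_)
      rw [mul_pow, Real.sq_sqrt (hgnnn x), Real.sq_sqrt (hgPnn x)]
    rw [h2] at h
    exact h
  -- step D : W ≤ 24 b2 + 8 K² a2
  have hGkc : ∀ k : Fin 3, Continuous (fun x => ∑ i : Fin 3,
      (pd i (fun y => n y k) x)^2) :=
    fun k => continuous_finset_sum _
      (fun i _ => (contDiff_pd (hnk k) i).continuous.pow 2)
  have hgP2 : (∫ x in Q3, (gP x)^2) ≤ 16 * K^2 * HP := interp hΦ hΦp hK.le hΦK
  have hgn2 : (∫ x in Q3, (gn x)^2) ≤ 48 * b2 := by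
    have hpt : ∀ x, (gn x)^2 ≤ 3 * ∑ k : Fin 3,
        (∑ i : Fin 3, (pd i (fun y => n y k) x)^2)^2 :=
      fun x => cs1 (fun k => ∑ i : Fin 3, (pd i (fun y => n y k) x)^2)
    have h1 : (∫ x in Q3, (gn x)^2) ≤ ∫ x in Q3, 3 * ∑ k : Fin 3,
        (∑ i : Fin 3, (pd i (fun y => n y k) x)^2)^2 := by
      refine intQ3_mono (hgncont.pow 2) ?_ hpt
      exact continuous_const.mul (continuous_finset_sum _
        (fun k _ => (hGkc k).pow 2))
    refine h1.trans ?_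
    rw [MeasureTheory.integral_const_mul, MeasureTheory.integral_finset_sum _
      (fun k _ => integrableOn_Q3 ((hGkc k).fun_pow 2))]
    have h2 : ∀ k : Fin 3, (∫ x in Q3,
        (∑ i : Fin 3, (pd i (fun y => n y k) x)^2)^2)
        ≤ 16 * (∑ i : Fin 3, ∑ j : Fin 3,
          ∫ x in Q3, (pd i (pd j (fun y => n y k)) x)^2) := by
      intro k
      have := interp (hnk k) (hnkp k) zero_le_one (fun x => hnk1 x k)
      calc (∫ x in Q3, (∑ i : Fin 3, (pd i (fun y => n y k) x)^2)^2)
          ≤ 16 * 1^2 * (∑ i : Fin 3, ∑ j : Fin 3,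
            ∫ x in Q3, (pd i (pd j (fun y => n y k)) x)^2) := this
        _ = 16 * (∑ i : Fin 3, ∑ j : Fin 3,
            ∫ x in Q3, (pd i (pd j (fun y => n y k)) x)^2) := by norm_num
    have h3 : (∑ k : Fin 3, ∫ x in Q3,
        (∑ i : Fin 3, (pd i (fun y => n y k) x)^2)^2)
        ≤ ∑ k : Fin 3, 16 * (∑ i : Fin 3, ∑ j : Fin 3,
          ∫ x in Q3, (pd i (pd j (fun y => n y k)) x)^2) :=
      Finset.sum_le_sum (fun k _ => h2 k)
    have h4 : (∑ k : Fin 3, 16 * (∑ i : Fin 3, ∑ j : Fin 3,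
        ∫ x in Q3, (pd i (pd j (fun y => n y k)) x)^2)) = 16 * b2 := by
      rw [hb2sum, Finset.mul_sum]
      exact Finset.sum_congr rfl (fun k _ => by
        rw [lap_identity (hnk k) (hnkp k)])
    nlinarith [h3, h4]
  have e7 : W ≤ 24 * b2 + 8 * K^2 * a2 := by
    have h1 : W ≤ ∫ x in Q3, ((1/2) * (gn x)^2 + (1/2) * (gP x)^2) := by
      refine intQ3_mono (hgncont.mul hgPcont) ?_ (fun x => ?_)
      · exact (continuous_const.mul (hgncont.pow 2)).add (continuous_const.mul (hgPcont.pow 2))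
      · nlinarith [sq_nonneg (gn x - gP x)]
    have i1 : MeasureTheory.IntegrableOn (fun x => (1/2) * (gn x)^2) Q3 :=
      (integrableOn_Q3 (hgncont.pow 2)).const_mul _
    have i2 : MeasureTheory.IntegrableOn (fun x => (1/2) * (gP x)^2) Q3 :=
      (integrableOn_Q3 (hgPcont.pow 2)).const_mul _
    rw [MeasureTheory.integral_add i1 i2,
      MeasureTheory.integral_const_mul, MeasureTheory.integral_const_mul] at h1
    have := hlapid
    nlinarith [hgP2, hgn2]
  have e8 : Real.sqrt W ≤ 5 * q + 3 * K * α := by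
    have h1 : W ≤ (5 * q + 3 * K * α)^2 := by
      nlinarith [e7, hq2, hα2, sq_nonneg q, sq_nonneg (K*α),
        mul_nonneg (mul_nonneg hK.le hαnn) hqnn]
    have h2 := Real.sqrt_le_sqrt h1
    rwa [Real.sqrt_sq (by positivity)] at h2
  -- final assembly
  have key : a2 ≤ α * M + ε * (3 * (α * (5 * q + 3 * K * α)) + α * α) := by
    have hc0 : (∫ x in Q3, |lap Φ x| * Bf x) ≤ 3 * (α * (5 * q + 3 * K * α)) + α * α := by
      rw [e4]
      have h6 : (∫ x in Q3, |lap Φ x| * (Real.sqrt (gn x) * Real.sqrt (gP x)))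
          ≤ α * (5 * q + 3 * K * α) :=
        e6.trans (mul_le_mul_of_nonneg_left e8 hαnn)
      linarith [e5, h6]
    have := mul_le_mul_of_nonneg_left hc0 hε0
    linarith [e1, e3]
  have hαq : 0 ≤ α * q := mul_nonneg hαnn hqnn
  have hc1 : ε * (9 * K + 1) * α^2 ≤ (1/2) * α^2 :=
    mul_le_mul_of_nonneg_right hεK (sq_nonneg α)
  have hc2 : 15 * ε * (α * q) ≤ (1/8) * (α * q) := by nlinarith [hε120, hαq]
  have key2 : α^2 ≤ M * α + 15 * ε * (α * q) + ε * (9 * K + 1) * α^2 := by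
    calc α^2 = a2 := hα2
      _ ≤ α * M + ε * (3 * (α * (5 * q + 3 * K * α)) + α * α) := key
      _ = M * α + 15 * ε * (α * q) + ε * (9 * K + 1) * α^2 := by ring
  have s1 : (1/2) * α^2 ≤ M * α + (1/8) * (α * q) := by linarith
  have s2 : 2 * (M * α) ≤ (1/4) * α^2 + 4 * M^2 := by nlinarith [sq_nonneg (α - 4*M)]
  have s3 : (1/4) * (α * q) ≤ (1/4) * α^2 + (1/16) * q^2 := by
    nlinarith [sq_nonneg (2*α - q)]
  have s4 : α^2 ≤ 8 * M^2 + (1/8) * q^2 := by linarith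
  show a2 ≤ 1/4 * b2 + 8 * M^2
  rw [← hα2, ← hq2]
  nlinarith [sq_nonneg q]
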